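/- Let H be a finite simple graph, let a0, b0 be distinct vertices lying in the same connected component of H, and let S be a minimal a0b0-separator in H. Then there exist vertices a and b of H such that neither a nor b is a cutvertex of H and S is a minimal ab-separator in H. In particular, if μ(H) ≥ 1 then the maximum size μ(H) of a minimal separator is attained by a minimal ab-separator whose endpoints a, b are both non-cutvertices of H. -/

import Mathlib

/-!
STATEMENT 11: If `S` is a minimal `a0b0`-separator in a finite simple graph `H`, where
`a0, b0` are distinct vertices in a common connected component, then there exist vertices
`a, b`, neither of which is a cutvertex of `H`, such that `S` is a minimal `ab`-separator.
-/

/-- `S` is an `ab`-separator: `a, b ∉ S` and `a` and `b` lie in different connected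
components of `H − S`, i.e. every walk from `a` to `b` in `H` meets `S`. -/
def IsSep {V : Type*} (H : SimpleGraph V) (a b : V) (S : Set V) : Prop :=
  a ∉ S ∧ b ∉ S ∧ ∀ p : H.Walk a b, ∃ v ∈ p.support, v ∈ S

/-- `S` is a minimal `ab`-separator: no proper subset of `S` is an `ab`-separator. -/
def IsMinSep {V : Type*} (H : SimpleGraph V) (a b : V) (S : Set V) : Prop :=
  IsSep H a b S ∧ ∀ S' ⊂ S, ¬ IsSep H a b S'

/-- `v` is a cutvertex of `G`: deleting `v` increases the number of connected components,
i.e. there are two vertices different from `v` lying in the same connected component of `G`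
but in different connected components of `G − v` (every walk between them passes through `v`). -/
def IsCutVertex {V : Type*} (G : SimpleGraph V) (v : V) : Prop :=
  ∃ x y : V, x ≠ v ∧ y ≠ v ∧ G.Reachable x y ∧ ∀ p : G.Walk x y, v ∈ p.support

/-!
Let `A` be the component of `a0` in `H − S` and pick `a ∈ A` as far from `b0` as possible.
By minimality every vertex of `S` reaches `b0` through a walk missing `A`, so every vertex of the
component of `b0` either lies in `A` or reaches `b0` without entering `A`. If `a` were a cutvertex,
some vertex `u ≠ a` would have all its walks to `b0` through `a`; then `u ∈ A` and `u` is farther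
from `b0` than `a`. The same argument on the side of `b0` gives `b`, and moving the endpoints of a
minimal separator inside their components of `H − S` keeps it a minimal separator.
-/

open SimpleGraph

section

variable {V : Type*} {H : SimpleGraph V} {S T : Set V} {a b s x y z : V}

def ReachableAvoiding (H : SimpleGraph V) (S : Set V) (x y : V) : Prop :=
  ∃ p : H.Walk x y, ∀ v ∈ p.support, v ∉ S

/-- The component of `a` in `H − S` (empty when `a ∈ S`). -/
def componentAvoiding (H : SimpleGraph V) (S : Set V) (a : V) : Set V :=
  {x | ReachableAvoiding H S a x}

namespace ReachableAvoiding

theorem refl (hx : x ∉ S) : ReachableAvoiding H S x x :=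
  ⟨.nil, by simpa⟩

theorem right_not_mem (h : ReachableAvoiding H S x y) : y ∉ S :=
  h.elim fun p hp => hp y p.end_mem_support

theorem reachable (h : ReachableAvoiding H S x y) : H.Reachable x y :=
  h.elim fun p _ => ⟨p⟩

theorem symm (h : ReachableAvoiding H S x y) : ReachableAvoiding H S y x :=
  h.elim fun p hp => ⟨p.reverse, fun v hv => hp v (by simpa using hv)⟩

theorem trans (hxy : ReachableAvoiding H S x y) (hyz : ReachableAvoiding H S y z) :
    ReachableAvoiding H S x z := by
  obtain ⟨p, hp⟩ := hxy
  obtain ⟨q, hq⟩ := hyz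
  refine ⟨p.append q, fun v hv => ?_⟩
  rcases Walk.mem_support_append_iff p q |>.mp hv with hv | hv
  exacts [hp v hv, hq v hv]

theorem mono (hTS : T ⊆ S) (h : ReachableAvoiding H S x y) : ReachableAvoiding H T x y :=
  h.elim fun p hp => ⟨p, fun v hv hvT => hp v hv (hTS hvT)⟩

theorem cons (hxy : H.Adj x y) (hx : x ∉ S) (h : ReachableAvoiding H S y z) :
    ReachableAvoiding H S x z := by
  obtain ⟨p, hp⟩ := h
  refine ⟨.cons hxy p, fun v hv => ?_⟩
  rcases List.mem_cons.mp (Walk.support_cons hxy p ▸ hv) with rfl | hv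
  exacts [hx, hp v hv]

theorem of_mem_support (p : H.Walk x y) (hp : ∀ v ∈ p.support, v ∉ S) (hz : z ∈ p.support) :
    ReachableAvoiding H S z y := by
  classical
  exact ⟨p.dropUntil z hz, fun v hv => hp v (p.support_dropUntil_subset_support hz hv)⟩

end ReachableAvoiding

theorem isSep_iff : IsSep H a b S ↔ a ∉ S ∧ b ∉ S ∧ ¬ ReachableAvoiding H S a b := by
  simp [IsSep, ReachableAvoiding]

theorem isMinSep_iff :
    IsMinSep H a b S ↔ IsSep H a b S ∧ ∀ s ∈ S, ReachableAvoiding H (S \ {s}) a b := by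
  refine and_congr_right fun hsep => ⟨fun hmin s hs => ?_, fun h S' hS' hsep' => ?_⟩
  · by_contra hreach
    refine hmin (S \ {s}) (Set.sdiff_singleton_ssubset.mpr hs) (isSep_iff.mpr ?_)
    exact ⟨fun h => hsep.1 h.1, fun h => hsep.2.1 h.1, hreach⟩
  · obtain ⟨s, hs, hsS'⟩ := Set.exists_of_ssubset hS'
    have hS's : S' ⊆ S \ {s} := fun v hv => ⟨hS'.subset hv, by rintro rfl; exact hsS' hv⟩
    exact (isSep_iff.mp hsep').2.2 ((h s hs).mono hS's)

theorem IsSep.symm (h : IsSep H a b S) : IsSep H b a S := by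
  obtain ⟨ha, hb, hab⟩ := isSep_iff.mp h
  exact isSep_iff.mpr ⟨hb, ha, fun hba => hab hba.symm⟩

theorem IsMinSep.symm (h : IsMinSep H a b S) : IsMinSep H b a S := by
  obtain ⟨hsep, hmin⟩ := isMinSep_iff.mp h
  exact isMinSep_iff.mpr ⟨hsep.symm, fun s hs => (hmin s hs).symm⟩

theorem IsMinSep.of_reachableAvoiding (h : IsMinSep H a b S) (hx : ReachableAvoiding H S a x)
    (hy : ReachableAvoiding H S b y) : IsMinSep H x y S := by
  obtain ⟨hsep, hmin⟩ := isMinSep_iff.mp h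
  refine isMinSep_iff.mpr ⟨isSep_iff.mpr ⟨hx.right_not_mem, hy.right_not_mem, fun hxy => ?_⟩,
    fun s hs => ?_⟩
  · exact (isSep_iff.mp hsep).2.2 (hx.trans (hxy.trans hy.symm))
  · have hsub : S \ {s} ⊆ S := Set.sdiff_subset
    exact ((hx.mono hsub).symm.trans (hmin s hs)).trans (hy.mono hsub)

theorem SimpleGraph.Walk.exists_walk_from_last_visit {G : SimpleGraph V} (p : G.Walk x y)
    (hs : s ∈ p.support) : ∃ q : G.Walk s y, q.support ⊆ p.support ∧ s ∉ q.support.tail := by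
  induction p with
  | nil =>
    obtain rfl : s = _ := by simpa using hs
    exact ⟨.nil, List.Subset.refl _, by simp⟩
  | cons h p ih =>
    by_cases hsp : s ∈ p.support
    · obtain ⟨q, hqp, hq⟩ := ih hsp
      exact ⟨q, List.Subset.trans hqp (by simp), hq⟩
    · obtain rfl : s = _ := by simpa [hsp] using hs
      exact ⟨.cons h p, List.Subset.refl _, by simpa using hsp⟩

theorem IsMinSep.reachableAvoiding_componentAvoiding_of_mem (h : IsMinSep H a b S) (hs : s ∈ S) :
    ReachableAvoiding H (componentAvoiding H S a) s b := by
  obtain ⟨hsep, hmin⟩ := isMinSep_iff.mp h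
  obtain ⟨-, hb, hab⟩ := isSep_iff.mp hsep
  obtain ⟨p, hp⟩ := hmin s hs
  have hsp : s ∈ p.support := by
    by_contra hsp
    exact hab ⟨p, fun v hv hvS => hp v hv ⟨hvS, fun hvs => hsp (hvs ▸ hv)⟩⟩
  obtain ⟨q, hqp, hqs⟩ := p.exists_walk_from_last_visit hsp
  have hq : ∀ v ∈ q.support.tail, v ∉ S := fun v hv hvS =>
    hp v (hqp (List.mem_of_mem_tail hv)) ⟨hvS, fun hvs => hqs (hvs ▸ hv)⟩
  cases q with
  | nil => exact absurd hs hb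
  | cons hadj q =>
    refine ⟨.cons hadj q, fun v hv hvA => ?_⟩
    rcases List.mem_cons.mp hv with rfl | hv
    · exact hvA.right_not_mem hs
    · exact hab (hvA.trans (.of_mem_support q hq hv))

theorem IsMinSep.mem_componentAvoiding_or_reachableAvoiding (h : IsMinSep H a b S)
    (hx : H.Reachable x b) :
    x ∈ componentAvoiding H S a ∨ ReachableAvoiding H (componentAvoiding H S a) x b := by
  obtain ⟨p⟩ := hx
  induction p with
  | nil => exact .inr (.refl (isSep_iff.mp h.1).2.2)
  | @cons x y _ hxy p ih =>
    by_cases hxA : x ∈ componentAvoiding H S a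
    · exact .inl hxA
    by_cases hxS : x ∈ S
    · exact .inr (h.reachableAvoiding_componentAvoiding_of_mem hxS)
    rcases ih h with hyA | hyb
    · exact .inl (ReachableAvoiding.cons hxy hxS hyA.symm).symm
    · exact .inr (hyb.cons hxy hxA)

theorem IsCutVertex.exists_forall_mem_support {G : SimpleGraph V} {v : V}
    (hv : IsCutVertex G v) (hvb : G.Reachable v b) :
    ∃ u ≠ v, G.Reachable u b ∧ ∀ q : G.Walk u b, v ∈ q.support := by
  classical
  obtain ⟨x, y, hx, hy, ⟨pxy⟩, hall⟩ := hv
  by_cases hxb : ∀ q : G.Walk x b, v ∈ q.support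
  · exact ⟨x, hx, Reachable.trans ⟨pxy.takeUntil v (hall pxy)⟩ hvb, hxb⟩
  push Not at hxb
  obtain ⟨qx, hqx⟩ := hxb
  refine ⟨y, hy, ⟨pxy.reverse.append qx⟩, fun q => ?_⟩
  by_contra hq
  have := hall (qx.append q.reverse)
  simp only [Walk.mem_support_append_iff, Walk.support_reverse, List.mem_reverse] at this
  tauto

theorem SimpleGraph.dist_lt_of_forall_walk_mem_support {G : SimpleGraph V} {u v : V}
    (hub : G.Reachable u b) (huv : u ≠ v) (hall : ∀ q : G.Walk u b, v ∈ q.support) :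
    G.dist v b < G.dist u b := by
  classical
  obtain ⟨q, hq⟩ := hub.exists_walk_length_eq_dist
  have hv := hall q
  have htake : (q.takeUntil v hv).length ≠ 0 := fun h0 => huv (Walk.eq_of_length_eq_zero h0)
  have hsplit := congrArg Walk.length (q.take_spec hv)
  rw [Walk.length_append] at hsplit
  calc G.dist v b ≤ (q.dropUntil v hv).length := dist_le _
    _ < q.length := by omega
    _ = G.dist u b := hq

theorem IsMinSep.exists_not_isCutVertex [Finite V] (h : IsMinSep H a b S)
    (hab : H.Reachable a b) : ∃ c ∈ componentAvoiding H S a, ¬ IsCutVertex H c := by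
  set A := componentAvoiding H S a
  have haA : a ∈ A := .refl h.1.1
  obtain ⟨c, hcA, hmax⟩ :=
    (Set.toFinite A).exists_maximalFor (fun x => H.dist x b) A ⟨a, haA⟩
  refine ⟨c, hcA, fun hcut => ?_⟩
  obtain ⟨u, hu, hub, hall⟩ := hcut.exists_forall_mem_support (hcA.reachable.symm.trans hab)
  have huA : u ∈ A :=
    (h.mem_componentAvoiding_or_reachableAvoiding hub).resolve_right fun ⟨q, hq⟩ =>
      hq c (hall q) hcA
  have hlt := dist_lt_of_forall_walk_mem_support hub hu hall
  exact hlt.not_ge (hmax huA hlt.le)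

end

theorem minimal_separator_noncut_endpoints_general {V : Type*} [Fintype V] (H : SimpleGraph V)
    (a0 b0 : V) (hreach : H.Reachable a0 b0)
    (S : Set V) (hS : IsMinSep H a0 b0 S) :
    ∃ a b : V, ¬ IsCutVertex H a ∧ ¬ IsCutVertex H b ∧ IsMinSep H a b S := by
  obtain ⟨a, ha, hna⟩ := hS.exists_not_isCutVertex hreach
  obtain ⟨b, hb, hnb⟩ := hS.symm.exists_not_isCutVertex hreach.symm
  exact ⟨a, b, hna, hnb, hS.of_reachableAvoiding ha hb⟩

theorem minimal_separator_noncut_endpoints {V : Type*} [Fintype V] (H : SimpleGraph V)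
    (a0 b0 : V) (h0 : a0 ≠ b0) (hreach : H.Reachable a0 b0)
    (S : Set V) (hS : IsMinSep H a0 b0 S) :
    ∃ a b : V, ¬ IsCutVertex H a ∧ ¬ IsCutVertex H b ∧ IsMinSep H a b S :=
  minimal_separator_noncut_endpoints_general H a0 b0 hreach S hS
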